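/- The function q^∞(f=0|θ) = max(0, p^π(f=0|θ) − α·(p_D(θ)·p^π(f=0))/p(θ)), where p^π(f=0) = ∫ p^π(f=0|θ)·p(θ) dθ, together with the normalizer q^∞(f=0) = (1−α)·p^π(f=0), satisfies the fixed-point equation q(f=0|θ) = p^π(f=0|θ)·(1−α)ρ(θ)/(α·p_D(θ) + (1−α)·ρ(θ)) with ρ(θ) = q(f=0|θ)·p(θ)/q(f=0), at every θ where the fixed point is strictly positive. -/

import Mathlib

open MeasureTheory

/-! Where the fixed point is positive, the maximum is its second argument, so
`q(f=0|θ) p(θ) = p^π(f=0|θ) p(θ) - α p_D(θ) p^π(f=0)`. Dividing by `p^π(f=0)` turns this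
into `α p_D(θ) + (1-α) ρ(θ) = p^π(f=0|θ) p(θ) / p^π(f=0)`: the denominator of the
iteration collapses, and the right-hand side reduces to `q(f=0|θ)`. -/

section FixedPoint

variable {α P a d p q ρ : ℝ}

lemma fixedPoint_denominator_eq (hp : p ≠ 0) (hP : P ≠ 0) (hα : α ≠ 1)
    (hq : q = a - α * (d * P) / p) (hρ : ρ = q * p / ((1 - α) * P)) :
    α * d + (1 - α) * ρ = a * p / P := by
  have : 1 - α ≠ 0 := sub_ne_zero.mpr hα.symm
  subst hq hρ
  field_simp
  ring

lemma eq_fixedPoint_of_eq_sub (hp : p ≠ 0) (hP : P ≠ 0) (hα : α ≠ 1) (ha : a ≠ 0)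
    (hq : q = a - α * (d * P) / p) (hρ : ρ = q * p / ((1 - α) * P)) :
    q = a * ((1 - α) * ρ) / (α * d + (1 - α) * ρ) := by
  have : 1 - α ≠ 0 := sub_ne_zero.mpr hα.symm
  rw [fixedPoint_denominator_eq hp hP hα hq hρ, hρ]
  field_simp

end FixedPoint

theorem classifier_fixed_point_general {Θ : Type*} (α P0 : ℝ) (hα : α ∈ Set.Ioo (0 : ℝ) 1)
    (p pD ppi : Θ → ℝ)
    (hp : ∀ θ, 0 < p θ) (hpD : ∀ θ, 0 ≤ pD θ)
    (hP0pos : 0 < P0)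
    (qinf : Θ → ℝ) (hqinf : ∀ θ, qinf θ = max 0 (ppi θ - α * (pD θ * P0) / p θ))
    (Zinf : ℝ) (hZ : Zinf = (1 - α) * P0)
    (ρ : Θ → ℝ) (hρ : ∀ θ, ρ θ = qinf θ * p θ / Zinf)
    (θ : Θ) (hpos : 0 < qinf θ) :
    qinf θ = ppi θ * ((1 - α) * ρ θ) / (α * pD θ + (1 - α) * ρ θ) := by
  have hsub_pos : 0 < ppi θ - α * (pD θ * P0) / p θ := by
    simpa [hqinf, lt_max_iff] using hpos
  have hq : qinf θ = ppi θ - α * (pD θ * P0) / p θ := by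
    rw [hqinf, max_eq_right hsub_pos.le]
  have hppi : 0 < ppi θ := by
    have : 0 ≤ α * (pD θ * P0) / p θ :=
      div_nonneg (mul_nonneg hα.1.le (mul_nonneg (hpD θ) hP0pos.le)) (hp θ).le
    linarith
  exact eq_fixedPoint_of_eq_sub (hp θ).ne' hP0pos.ne' hα.2.ne hppi.ne' hq (hZ ▸ hρ θ)

/-- The function `q^∞(f=0|θ) = max(0, p^π(f=0|θ) - α p_D(θ) p^π(f=0) / p(θ))`, with
normalizer `q^∞(f=0) = (1-α) p^π(f=0)` where `p^π(f=0) = ∫ p^π(f=0|θ) p(θ) dθ`, satisfies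
the fixed-point equation of the classifier/rejection-sampling iteration at every `θ` where it
is strictly positive. -/
theorem classifier_fixed_point {Θ : Type*} [MeasurableSpace Θ] (μ : Measure Θ)
    (α P0 : ℝ) (hα : α ∈ Set.Ioo (0 : ℝ) 1)
    (p pD ppi : Θ → ℝ)
    (hp : ∀ θ, 0 < p θ) (hpD : ∀ θ, 0 ≤ pD θ)
    (hppi : ∀ θ, ppi θ ∈ Set.Icc (0 : ℝ) 1)
    (hP0 : P0 = ∫ θ, ppi θ * p θ ∂μ) (hP0pos : 0 < P0)
    (qinf : Θ → ℝ) (hqinf : ∀ θ, qinf θ = max 0 (ppi θ - α * (pD θ * P0) / p θ))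
    (Zinf : ℝ) (hZ : Zinf = (1 - α) * P0)
    (ρ : Θ → ℝ) (hρ : ∀ θ, ρ θ = qinf θ * p θ / Zinf)
    (θ : Θ) (hpos : 0 < qinf θ) :
    qinf θ = ppi θ * ((1 - α) * ρ θ) / (α * pD θ + (1 - α) * ρ θ) :=
  classifier_fixed_point_general α P0 hα p pD ppi hp hpD hP0pos qinf hqinf Zinf hZ ρ hρ θ hpos
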